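/- For every uniformly discrete set Λ ⊆ ℝ^d, the uniform densities defined by comparison with the lattice ℤ^d coincide with the Beurling densities: D⁻(Λ) = D⁻_B(Λ) and D⁺(Λ) = D⁺_B(Λ), where D⁻(Λ) = sup{α ≥ 0 : αℤ^d ⪯ Λ} and D⁺(Λ) = inf{α ≥ 0 : Λ ⪯ αℤ^d} (with D⁺(Λ) = ∞ if no such α exists). -/

import Mathlib

open MeasureTheory Filter Set Pointwise ENNReal

noncomputable section

/-- Euclidean space `ℝ^d`. -/
abbrev Ed (d : ℕ) := EuclideanSpace ℝ (Fin d)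

/-- `Λ` is uniformly discrete: distinct points are at distance at least some `δ > 0`. -/
def UniformlyDiscrete {d : ℕ} (Λ : Set (Ed d)) : Prop :=
  ∃ δ > (0:ℝ), ∀ l ∈ Λ, ∀ l' ∈ Λ, l ≠ l' → δ ≤ ‖l - l'‖

/-- The closed cube of side length `h` centered at `x`. -/
def cube {d : ℕ} (h : ℝ) (x : Ed d) : Set (Ed d) := {y | ∀ i, |y i - x i| ≤ h / 2}

/-- The integer lattice `ℤ^d ⊆ ℝ^d`. -/
def intLattice (d : ℕ) : Set (Ed d) := {x | ∀ i, ∃ n : ℤ, x i = (n : ℝ)}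

/-- Lower Beurling density `D⁻_B(Λ) = liminf_{h→∞} inf_x card(Λ ∩ Q_h(x))/h^d`. -/
def lowerBeurlingDensity {d : ℕ} (Λ : Set (Ed d)) : ℝ≥0∞ :=
  liminf (fun h : ℝ => ⨅ x : Ed d, ((Λ ∩ cube h x).ncard : ℝ≥0∞) / ENNReal.ofReal (h ^ d)) atTop

/-- Upper Beurling density `D⁺_B(Λ) = limsup_{h→∞} sup_x card(Λ ∩ Q_h(x))/h^d`. -/
def upperBeurlingDensity {d : ℕ} (Λ : Set (Ed d)) : ℝ≥0∞ :=
  limsup (fun h : ℝ => ⨆ x : Ed d, ((Λ ∩ cube h x).ncard : ℝ≥0∞) / ENNReal.ofReal (h ^ d)) atTop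

/-- The comparison relation `α ℤ^d ⪯ Λ`. -/
def LowerRel {d : ℕ} (Λ : Set (Ed d)) (α : ℝ≥0∞) : Prop :=
  ∀ ε > (0:ℝ), ∃ K : Set (Ed d), IsCompact K ∧ ∀ L : Set (Ed d), IsCompact L →
    ENNReal.ofReal (1 - ε) * α * ((intLattice d ∩ L).ncard : ℝ≥0∞) ≤
      ((Λ ∩ (K + L)).ncard : ℝ≥0∞)

/-- The comparison relation `Λ ⪯ α ℤ^d`. -/
def UpperRel {d : ℕ} (Λ : Set (Ed d)) (α : ℝ≥0∞) : Prop :=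
  ∀ ε > (0:ℝ), ∃ K : Set (Ed d), IsCompact K ∧ ∀ L : Set (Ed d), IsCompact L →
    ENNReal.ofReal (1 - ε) * ((Λ ∩ L).ncard : ℝ≥0∞) ≤
      α * ((intLattice d ∩ (K + L)).ncard : ℝ≥0∞)

/-- The lower uniform density `D⁻(Λ) = sup {α : αℤ^d ⪯ Λ}`. -/
def lowerUniformDensity {d : ℕ} (Λ : Set (Ed d)) : ℝ≥0∞ := sSup {α | LowerRel Λ α}

/-- The upper uniform density `D⁺(Λ) = inf {α : Λ ⪯ αℤ^d}` (`= ∞` if no such `α` exists). -/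
def upperUniformDensity {d : ℕ} (Λ : Set (Ed d)) : ℝ≥0∞ := sInf {α | UpperRel Λ α}

/-! Tested on cubes `L = Q_h(x)`, a relation `α ℤ^d ⪯ Λ` (or `Λ ⪯ α ℤ^d`) compares the number
of points of `Λ` in a cube with that of `ℤ^d` in a slightly smaller (larger) cube: a compact `K`
lies in some `Q_R(0)`, so `K + Q_h(x) ⊆ Q_{h+R}(x)`, and `ℤ^d` has between `(h-1)^d` and
`(h+1)^d` points in a cube of side `h`. Both bounds are `h^d (1 + o(1))`, so the relation bounds
the Beurling density, giving `D⁻ ≤ D⁻_B` and `D⁺_B ≤ D⁺`.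

Conversely, if every cube of one large side `h` contains at least `α h^d` (at most `β h^d`)
points of `Λ`, double counting the pairs `(p, q) ∈ (ℤ^d ∩ L) × Λ` with `q ∈ Q_h(p)` (or with the
roles of `ℤ^d` and `Λ` exchanged) gives the relation with `K = Q_h(0)`. -/

open Topology

theorem card_Icc_ceil_floor_le {a b : ℝ} (hab : a ≤ b) :
    ((Finset.Icc ⌈a⌉ ⌊b⌋).card : ℝ) ≤ b - a + 1 := by
  rw [Int.card_Icc]
  rcases le_or_gt (⌊b⌋ + 1 - ⌈a⌉) 0 with h | h
  · rw [Int.toNat_of_nonpos h]; push_cast; linarith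
  · rw [← Int.cast_natCast, Int.toNat_of_nonneg h.le]
    push_cast
    linarith [Int.floor_le b, Int.le_ceil a]

theorem sub_sub_one_le_card_Icc_ceil_floor (a b : ℝ) :
    b - a - 1 ≤ ((Finset.Icc ⌈a⌉ ⌊b⌋).card : ℝ) := by
  rw [Int.card_Icc]
  have : ((⌊b⌋ + 1 - ⌈a⌉ : ℤ) : ℝ) ≤ ((⌊b⌋ + 1 - ⌈a⌉).toNat : ℤ) := by
    exact_mod_cast Int.self_le_toNat _
  push_cast at this
  linarith [Int.sub_one_lt_floor b, Int.ceil_lt_add_one a]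

theorem eventually_ofReal_one_sub_mul_pow_le (d : ℕ) (a b : ℝ) {ε : ℝ} (hε : 0 < ε) :
    ∀ᶠ H in atTop,
      ENNReal.ofReal (1 - ε) * ENNReal.ofReal ((H + a) ^ d) ≤ ENNReal.ofReal ((H + b) ^ d) := by
  have hlim : Tendsto (fun H : ℝ => (1 - ε) * (1 + (a - b) / (H + b)) ^ d) atTop
      (𝓝 ((1 - ε) * (1 + 0) ^ d)) :=
    (((tendsto_const_nhds.div_atTop (tendsto_atTop_add_const_right _ b tendsto_id)).const_add
      1).pow d).const_mul _
  have hlt : (1 - ε) * (1 + 0 : ℝ) ^ d < 1 := by simpa using hε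
  filter_upwards [hlim.eventually_lt_const hlt, eventually_gt_atTop (-a),
    eventually_gt_atTop (-b)] with H hH ha hb
  have hb' : 0 < H + b := by linarith
  rw [← ENNReal.ofReal_mul' (pow_nonneg (by linarith) d)]
  refine ENNReal.ofReal_le_ofReal ?_
  rw [show 1 + (a - b) / (H + b) = (H + a) / (H + b) by field_simp; ring, div_pow,
    mul_div_assoc', div_lt_one (pow_pos hb' d)] at hH
  exact hH.le

theorem ENNReal.le_of_forall_pos_one_sub_sq_mul_le {x y : ℝ≥0∞}
    (h : ∀ ε > 0, ENNReal.ofReal (1 - ε) * ENNReal.ofReal (1 - ε) * x ≤ y) : x ≤ y := by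
  refine ENNReal.le_of_forall_lt_one_mul_le fun a ha => ?_
  obtain ⟨r, hr, rfl⟩ : ∃ r : ℝ, 0 ≤ r ∧ a = ENNReal.ofReal r :=
    ⟨a.toReal, ENNReal.toReal_nonneg, (ENNReal.ofReal_toReal ha.ne_top).symm⟩
  have hr1 : r < 1 := ENNReal.ofReal_lt_one.1 ha
  refine le_trans ?_ (h ((1 - r) / 2) (by linarith))
  gcongr
  rw [← ENNReal.ofReal_mul (by linarith)]
  -- with `ε = (1 - r) / 2`: `(1 - ε) ^ 2 - r = ((1 - r) / 2) ^ 2`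
  exact ENNReal.ofReal_le_ofReal (by nlinarith [sq_nonneg (1 - r)])

section

variable {d : ℕ}

-- `Set.ncard` is `0` on infinite sets, so the counts below are only meaningful for such sets.
def BoundedlyFinite (Λ : Set (Ed d)) : Prop :=
  ∀ B : Set (Ed d), Bornology.IsBounded B → (Λ ∩ B).Finite

theorem UniformlyDiscrete.boundedlyFinite {Λ : Set (Ed d)} (hΛ : UniformlyDiscrete Λ) :
    BoundedlyFinite Λ := by
  intro B hB
  obtain ⟨δ, hδ, hsep⟩ := hΛ
  obtain ⟨t, ht, hcover⟩ := Metric.totallyBounded_iff.1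
    (hB.isCompact_closure.totallyBounded.subset subset_closure) (δ / 2) (half_pos hδ)
  refine (ht.biUnion fun c _ => (?_ : (Λ ∩ Metric.ball c (δ / 2)).Subsingleton).finite).subset ?_
  · rintro a ⟨haΛ, hac⟩ b ⟨hbΛ, hbc⟩
    by_contra hab
    have := hsep a haΛ b hbΛ hab
    rw [Metric.mem_ball] at hac hbc
    linarith [dist_triangle_right a b c, dist_eq_norm a b]
  · rintro a ⟨haΛ, haB⟩
    obtain ⟨c, hc, hac⟩ := Set.mem_iUnion₂.1 (hcover haB)
    exact Set.mem_biUnion hc ⟨haΛ, hac⟩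

theorem mem_cube_comm {h : ℝ} {x y : Ed d} : y ∈ cube h x ↔ x ∈ cube h y := by
  simp only [cube, Set.mem_ofPred_eq, abs_sub_comm]

theorem cube_add_cube_subset (a b : ℝ) (x y : Ed d) :
    cube a x + cube b y ⊆ cube (a + b) (x + y) := by
  rintro _ ⟨u, hu, v, hv, rfl⟩ i
  calc |(u + v) i - (x + y) i| = |(u i - x i) + (v i - y i)| := by
        simp only [PiLp.add_apply]; ring_nf
    _ ≤ |u i - x i| + |v i - y i| := abs_add_le _ _
    _ ≤ (a + b) / 2 := by linarith [hu i, hv i]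

theorem mem_cube_zero_add_of_mem_cube {h : ℝ} {p q : Ed d} {L : Set (Ed d)} (hq : q ∈ cube h p)
    (hp : p ∈ L) : q ∈ cube h 0 + L :=
  ⟨q - p, fun i => by simpa using hq i, p, hp, sub_add_cancel q p⟩

theorem closedBall_subset_cube (r : ℝ) (x : Ed d) : Metric.closedBall x r ⊆ cube (2 * r) x :=
  fun y hy i => by
    have := (PiLp.norm_apply_le (y - x) i).trans (mem_closedBall_iff_norm.1 hy)
    simpa [Real.norm_eq_abs] using this

theorem cube_eq_preimage (h : ℝ) (x : Ed d) :
    cube h x = EuclideanSpace.equiv (Fin d) ℝ ⁻¹'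
      Set.univ.pi fun i => Metric.closedBall (x i) (h / 2) := by
  ext y
  simp [cube, Real.dist_eq]

theorem isCompact_cube (h : ℝ) (x : Ed d) : IsCompact (cube h x) := by
  rw [cube_eq_preimage]
  exact (EuclideanSpace.equiv (Fin d) ℝ).toHomeomorph.isCompact_preimage.2
    (isCompact_univ_pi fun i => isCompact_closedBall _ _)

theorem Bornology.IsBounded.exists_add_cube_subset {K : Set (Ed d)} (hK : IsBounded K) :
    ∃ R ≥ 0, ∀ h x, K + cube h x ⊆ cube (h + R) x := by
  obtain ⟨r, hr, hKr⟩ := hK.subset_closedBall_lt 0 0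
  refine ⟨2 * r, by positivity, fun h x => ?_⟩
  calc K + cube h x ⊆ cube (2 * r) 0 + cube h x :=
        Set.add_subset_add_right (hKr.trans (closedBall_subset_cube r 0))
    _ ⊆ cube (h + 2 * r) x := by
        simpa [add_comm] using cube_add_cube_subset (2 * r) h 0 x

theorem intLattice_inter_cube_eq_image (h : ℝ) (x : Ed d) :
    intLattice d ∩ cube h x = (fun n : Fin d → ℤ => WithLp.toLp 2 fun i => (n i : ℝ)) ''
      Fintype.piFinset fun i => Finset.Icc ⌈x i - h / 2⌉ ⌊x i + h / 2⌋ := by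
  ext y
  simp only [intLattice, cube, Set.mem_inter_iff, Set.mem_ofPred_eq, Set.mem_image,
    Finset.mem_coe, Fintype.mem_piFinset, Finset.mem_Icc, Int.ceil_le, Int.le_floor]
  constructor
  · rintro ⟨hy, hcube⟩
    choose n hn using hy
    refine ⟨n, fun i => ?_, PiLp.ext fun i => (hn i).symm⟩
    have := abs_le.1 (hcube i)
    constructor <;> linarith [hn i]
  · rintro ⟨n, hn, rfl⟩
    exact ⟨fun i => ⟨n i, rfl⟩, fun i => abs_le.2 ⟨by linarith [hn i], by linarith [hn i]⟩⟩

theorem ncard_intLattice_inter_cube (h : ℝ) (x : Ed d) :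
    (intLattice d ∩ cube h x).ncard =
      ∏ i, (Finset.Icc ⌈x i - h / 2⌉ ⌊x i + h / 2⌋).card := by
  rw [intLattice_inter_cube_eq_image, Set.ncard_image_of_injective, Set.ncard_coe_finset,
    Fintype.card_piFinset]
  intro m n hmn
  funext i
  simpa using congrArg (· i) hmn

theorem intLattice_boundedlyFinite : BoundedlyFinite (intLattice d) := by
  intro L hL
  obtain ⟨r, hr⟩ := hL.subset_closedBall 0
  refine Set.Finite.subset ?_
    (Set.inter_subset_inter_right _ (hr.trans (closedBall_subset_cube r 0)))
  rw [intLattice_inter_cube_eq_image]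
  exact Set.toFinite _

theorem ncard_intLattice_inter_cube_le {h : ℝ} (hh : 0 ≤ h) (x : Ed d) :
    ((intLattice d ∩ cube h x).ncard : ℝ≥0∞) ≤ ENNReal.ofReal ((h + 1) ^ d) := by
  rw [← ENNReal.ofReal_natCast, ncard_intLattice_inter_cube]
  refine ENNReal.ofReal_le_ofReal ?_
  push_cast
  calc ∏ i, ((Finset.Icc ⌈x i - h / 2⌉ ⌊x i + h / 2⌋).card : ℝ)
        ≤ ∏ _i : Fin d, (h + 1) :=
        Finset.prod_le_prod (fun _ _ => Nat.cast_nonneg _) fun i _ =>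
          (card_Icc_ceil_floor_le (by linarith)).trans_eq (by ring)
    _ = (h + 1) ^ d := by simp

theorem ofReal_sub_one_pow_le_ncard_intLattice_inter_cube {h : ℝ} (hh : 1 ≤ h) (x : Ed d) :
    ENNReal.ofReal ((h - 1) ^ d) ≤ (intLattice d ∩ cube h x).ncard := by
  rw [← ENNReal.ofReal_natCast, ncard_intLattice_inter_cube]
  refine ENNReal.ofReal_le_ofReal ?_
  push_cast
  calc (h - 1) ^ d = ∏ _i : Fin d, (h - 1) := by simp
    _ ≤ ∏ i, ((Finset.Icc ⌈x i - h / 2⌉ ⌊x i + h / 2⌋).card : ℝ) :=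
        Finset.prod_le_prod (fun _ _ => by linarith) fun i _ =>
          (sub_sub_one_le_card_Icc_ceil_floor _ _).trans_eq' (by ring)

theorem mul_ncard_inter_le_mul_ncard_inter_cube_add {A B L : Set (Ed d)}
    (hA : BoundedlyFinite A) (hB : BoundedlyFinite B) (hL : Bornology.IsBounded L) {h : ℝ}
    {a b : ℝ≥0∞} (ha : ∀ x, a ≤ (B ∩ cube h x).ncard)
    (hb : ∀ y, (A ∩ cube h y).ncard ≤ b) :
    a * (A ∩ L).ncard ≤ b * (B ∩ (cube h 0 + L)).ncard := by
  classical
  have hAL := hA L hL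
  have hBL := hB _ ((isCompact_cube h 0).isBounded.add hL)
  have key := Finset.card_nsmul_le_card_nsmul (fun p q => q ∈ cube h p)
    (s := hAL.toFinset) (t := hBL.toFinset) (m := a) (n := b) ?_ ?_
  · rwa [nsmul_eq_mul, nsmul_eq_mul, ← Set.ncard_eq_toFinset_card _ hAL,
      ← Set.ncard_eq_toFinset_card _ hBL, mul_comm, mul_comm _ b] at key
  · intro p hp
    rw [Set.Finite.mem_toFinset] at hp
    refine (ha p).trans_eq ?_
    rw [← Set.ncard_coe_finset, Finset.coe_bipartiteAbove]
    congr 2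
    ext q
    simp only [Set.Finite.mem_toFinset, Set.mem_inter_iff, Set.mem_ofPred_eq]
    exact ⟨fun hq => ⟨⟨hq.1, mem_cube_zero_add_of_mem_cube hq.2 hp.2⟩, hq.2⟩,
      fun hq => ⟨hq.1.1, hq.2⟩⟩
  · intro q _
    refine le_trans ?_ (hb q)
    rw [← Set.ncard_coe_finset, Finset.coe_bipartiteBelow]
    exact Nat.cast_le.2 <| Set.ncard_le_ncard (fun p hp => ⟨(hAL.mem_toFinset.1 hp.1).1,
      mem_cube_comm.1 hp.2⟩) (hA _ (isCompact_cube h q).isBounded)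

theorem LowerRel.le_lowerBeurlingDensity {Λ : Set (Ed d)} {α : ℝ≥0∞}
    (hΛ : BoundedlyFinite Λ) (hα : LowerRel Λ α) : α ≤ lowerBeurlingDensity Λ := by
  refine ENNReal.le_of_forall_pos_one_sub_sq_mul_le fun ε hε => ?_
  obtain ⟨K, hK, hKL⟩ := hα ε hε
  obtain ⟨R, hR, hKR⟩ := hK.isBounded.exists_add_cube_subset
  refine le_liminf_of_le (by isBoundedDefault) ?_
  filter_upwards [eventually_ofReal_one_sub_mul_pow_le d 0 (-(R + 1)) hε,
    eventually_ge_atTop (R + 1)] with H hpow hH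
  have hH0 : 0 < H := by linarith
  refine le_iInf fun x => ?_
  rw [ENNReal.le_div_iff_mul_le (Or.inl (ENNReal.ofReal_pos.2 (by positivity)).ne')
    (Or.inl ENNReal.ofReal_ne_top)]
  rw [add_zero, ← sub_eq_add_neg, ← sub_sub] at hpow
  calc ENNReal.ofReal (1 - ε) * ENNReal.ofReal (1 - ε) * α * ENNReal.ofReal (H ^ d)
      = ENNReal.ofReal (1 - ε) * α * (ENNReal.ofReal (1 - ε) * ENNReal.ofReal (H ^ d)) := by
        ring
    _ ≤ ENNReal.ofReal (1 - ε) * α * ENNReal.ofReal ((H - R - 1) ^ d) := by gcongr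
    _ ≤ ENNReal.ofReal (1 - ε) * α * (intLattice d ∩ cube (H - R) x).ncard := by
        gcongr
        exact ofReal_sub_one_pow_le_ncard_intLattice_inter_cube (by linarith) x
    _ ≤ (Λ ∩ (K + cube (H - R) x)).ncard := hKL _ (isCompact_cube _ _)
    _ ≤ (Λ ∩ cube H x).ncard := by
        refine Nat.cast_le.2 (Set.ncard_le_ncard (Set.inter_subset_inter_right _ ?_)
          (hΛ _ (isCompact_cube H x).isBounded))
        simpa using hKR (H - R) x

theorem UpperRel.upperBeurlingDensity_le {Λ : Set (Ed d)} {α : ℝ≥0∞}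
    (hα : UpperRel Λ α) : upperBeurlingDensity Λ ≤ α := by
  refine ENNReal.le_of_forall_pos_one_sub_sq_mul_le fun ε hε => ?_
  obtain ⟨K, hK, hKL⟩ := hα ε hε
  obtain ⟨R, hR, hKR⟩ := hK.isBounded.exists_add_cube_subset
  rw [upperBeurlingDensity, ← ENNReal.limsup_const_mul_of_ne_top (by finiteness)]
  refine limsup_le_of_le (by isBoundedDefault) ?_
  filter_upwards [eventually_ofReal_one_sub_mul_pow_le d (R + 1) 0 hε,
    eventually_gt_atTop 0] with h hpow hh
  rw [ENNReal.mul_iSup]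
  refine iSup_le fun x => ?_
  rw [← mul_div_assoc, ENNReal.div_le_iff_le_mul
    (Or.inl (ENNReal.ofReal_pos.2 (by positivity)).ne') (Or.inl ENNReal.ofReal_ne_top)]
  rw [add_zero, ← add_assoc] at hpow
  calc ENNReal.ofReal (1 - ε) * ENNReal.ofReal (1 - ε) * (Λ ∩ cube h x).ncard
      ≤ ENNReal.ofReal (1 - ε) * (α * (intLattice d ∩ (K + cube h x)).ncard) := by
        rw [mul_assoc]
        gcongr ENNReal.ofReal (1 - ε) * ?_
        exact hKL _ (isCompact_cube h x)
    _ ≤ ENNReal.ofReal (1 - ε) * (α * (intLattice d ∩ cube (h + R) x).ncard) := by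
        gcongr ENNReal.ofReal (1 - ε) * (α * ?_)
        exact_mod_cast Set.ncard_le_ncard (Set.inter_subset_inter_right _ (hKR h x))
          (intLattice_boundedlyFinite _ (isCompact_cube _ x).isBounded)
    _ ≤ ENNReal.ofReal (1 - ε) * (α * ENNReal.ofReal ((h + R + 1) ^ d)) := by
        gcongr
        exact ncard_intLattice_inter_cube_le (by linarith) x
    _ = α * (ENNReal.ofReal (1 - ε) * ENNReal.ofReal ((h + R + 1) ^ d)) := by ring
    _ ≤ α * ENNReal.ofReal (h ^ d) := by gcongr

theorem lowerRel_of_lt_lowerBeurlingDensity {Λ : Set (Ed d)} {α : ℝ≥0∞}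
    (hΛ : BoundedlyFinite Λ) (hα : α < lowerBeurlingDensity Λ) : LowerRel Λ α := by
  intro ε hε
  obtain ⟨h, hαh, hpow, hh⟩ := ((eventually_lt_of_lt_liminf hα).and
    ((eventually_ofReal_one_sub_mul_pow_le d 1 0 hε).and (eventually_gt_atTop 0))).exists
  have hpos : ENNReal.ofReal (h ^ d) ≠ 0 := (ENNReal.ofReal_pos.2 (by positivity)).ne'
  refine ⟨cube h 0, isCompact_cube h 0, fun L hL => ?_⟩
  have hcount : α * ENNReal.ofReal (h ^ d) * (intLattice d ∩ L).ncard ≤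
      ENNReal.ofReal ((h + 1) ^ d) * (Λ ∩ (cube h 0 + L)).ncard :=
    mul_ncard_inter_le_mul_ncard_inter_cube_add intLattice_boundedlyFinite hΛ hL.isBounded
      (fun x => (ENNReal.le_div_iff_mul_le (Or.inl hpos) (Or.inl ENNReal.ofReal_ne_top)).1
        (hαh.trans_le (iInf_le _ x)).le)
      (fun y => ncard_intLattice_inter_cube_le hh.le y)
  rw [← ENNReal.mul_le_mul_iff_right (a := ENNReal.ofReal ((h + 1) ^ d))
    (ENNReal.ofReal_pos.2 (by positivity)).ne' ENNReal.ofReal_ne_top]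
  rw [add_zero] at hpow
  calc ENNReal.ofReal ((h + 1) ^ d) * (ENNReal.ofReal (1 - ε) * α * (intLattice d ∩ L).ncard)
      = ENNReal.ofReal (1 - ε) * ENNReal.ofReal ((h + 1) ^ d) * (α * (intLattice d ∩ L).ncard) := by
        ring
    _ ≤ ENNReal.ofReal (h ^ d) * (α * (intLattice d ∩ L).ncard) := by gcongr
    _ = α * ENNReal.ofReal (h ^ d) * (intLattice d ∩ L).ncard := by ring
    _ ≤ _ := hcount

theorem upperRel_of_upperBeurlingDensity_lt {Λ : Set (Ed d)} {β : ℝ≥0∞}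
    (hΛ : BoundedlyFinite Λ) (hβ : upperBeurlingDensity Λ < β) : UpperRel Λ β := by
  intro ε hε
  obtain ⟨h, hβh, hpow, hh⟩ := ((eventually_lt_of_limsup_lt hβ).and
    ((eventually_ofReal_one_sub_mul_pow_le d 0 (-1) hε).and (eventually_ge_atTop 1))).exists
  have hpos : ENNReal.ofReal (h ^ d) ≠ 0 := (ENNReal.ofReal_pos.2 (by positivity)).ne'
  refine ⟨cube h 0, isCompact_cube h 0, fun L hL => ?_⟩
  have hcount : ENNReal.ofReal ((h - 1) ^ d) * (Λ ∩ L).ncard ≤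
      β * ENNReal.ofReal (h ^ d) * (intLattice d ∩ (cube h 0 + L)).ncard :=
    mul_ncard_inter_le_mul_ncard_inter_cube_add hΛ intLattice_boundedlyFinite hL.isBounded
      (fun x => ofReal_sub_one_pow_le_ncard_intLattice_inter_cube hh x)
      (fun y => (ENNReal.div_le_iff_le_mul (Or.inl hpos) (Or.inl ENNReal.ofReal_ne_top)).1
        ((le_iSup _ y).trans hβh.le))
  rw [← ENNReal.mul_le_mul_iff_right hpos ENNReal.ofReal_ne_top]
  rw [add_zero, ← sub_eq_add_neg] at hpow
  calc ENNReal.ofReal (h ^ d) * (ENNReal.ofReal (1 - ε) * (Λ ∩ L).ncard)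
      = ENNReal.ofReal (1 - ε) * ENNReal.ofReal (h ^ d) * (Λ ∩ L).ncard := by ring
    _ ≤ ENNReal.ofReal ((h - 1) ^ d) * (Λ ∩ L).ncard := by gcongr
    _ ≤ β * ENNReal.ofReal (h ^ d) * (intLattice d ∩ (cube h 0 + L)).ncard := hcount
    _ = ENNReal.ofReal (h ^ d) * (β * (intLattice d ∩ (cube h 0 + L)).ncard) := by ring

theorem lowerUniformDensity_eq_lowerBeurlingDensity {Λ : Set (Ed d)} (hΛ : BoundedlyFinite Λ) :
    lowerUniformDensity Λ = lowerBeurlingDensity Λ :=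
  le_antisymm (sSup_le fun _ hα => hα.le_lowerBeurlingDensity hΛ) <|
    le_of_forall_lt_imp_le_of_dense fun _ hα =>
      le_sSup (lowerRel_of_lt_lowerBeurlingDensity hΛ hα)

theorem upperUniformDensity_eq_upperBeurlingDensity {Λ : Set (Ed d)} (hΛ : BoundedlyFinite Λ) :
    upperUniformDensity Λ = upperBeurlingDensity Λ :=
  le_antisymm
    (le_of_forall_gt_imp_ge_of_dense fun _ hβ =>
      sInf_le (upperRel_of_upperBeurlingDensity_lt hΛ hβ))
    (le_sInf fun _ hα => hα.upperBeurlingDensity_le)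

end

/-- In `ℝ^d`, the uniform densities defined by comparison with `ℤ^d` coincide with the classical
Beurling densities. -/
theorem uniformDensity_eq_beurlingDensity (d : ℕ) (Λ : Set (Ed d))
    (hΛud : UniformlyDiscrete Λ) :
    lowerUniformDensity Λ = lowerBeurlingDensity Λ ∧
    upperUniformDensity Λ = upperBeurlingDensity Λ :=
  ⟨lowerUniformDensity_eq_lowerBeurlingDensity hΛud.boundedlyFinite,
    upperUniformDensity_eq_upperBeurlingDensity hΛud.boundedlyFinite⟩
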